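/- Pairs of ν-biased bases of ℂ³ for the Feige matrix ν are unique up to a single unitary: let ν be the 3×3 matrix ν = [[9/16, 1/16, 3/8], [1/16, 9/16, 3/8], [3/8, 3/8, 1/4]]. Suppose ({e_i}_{i=1}^3, {f_j}_{j=1}^3) and ({e'_i}_{i=1}^3, {f'_j}_{j=1}^3) are two pairs of orthonormal bases of ℂ³ satisfying |⟨e_i, f_j⟩|² = ν_{ij} and |⟨e'_i, f'_j⟩|² = ν_{ij} for all i, j. Then there exists a unitary U on ℂ³ such that U |e_i⟩⟨e_i| U* = |e'_i⟩⟨e'_i| and U |f_j⟩⟨f_j| U* = |f'_j⟩⟨f'_j| for all i, j (with the same index labels, no relabeling). -/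

import Mathlib

open BigOperators Matrix

/-- The rank-one projection `|u⟩⟨u|` associated with a vector `u ∈ ℂ³`. -/
def outer (u : Fin 3 → ℂ) : Matrix (Fin 3) (Fin 3) ℂ :=
  Matrix.vecMulVec u (star u)

/-- The Feige matrix `ν = [[9/16, 1/16, 3/8], [1/16, 9/16, 3/8], [3/8, 3/8, 1/4]]`. -/
noncomputable def feigeNu : Matrix (Fin 3) (Fin 3) ℝ :=
  !![9/16, 1/16, 3/8; 1/16, 9/16, 3/8; 3/8, 3/8, 1/4]

/-!
Two orthonormal bases `e`, `f` are determined up to a common unitary by their transition matrix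
`M i j = ⟨e i, f j⟩`, and multiplying the basis vectors by phases multiplies `M` by diagonal
unitaries on both sides. So it suffices that every unitary `M` with `|M i j|² = ν i j` becomes
the real matrix `feigeRoot` after such a rescaling: once the first row and column of `M` are made
nonnegative, they are fixed by `ν`, and the orthogonality relations of `M` then force the
remaining four entries.
-/
section PhaseEquivalence

variable {n : Type*} [DecidableEq n]

def phaseDiag (c : n → Circle) : Matrix n n ℂ :=
  diagonal fun i => (c i : ℂ)

lemma star_phaseDiag (c : n → Circle) : star (phaseDiag c) = phaseDiag c⁻¹ := by
  simp [phaseDiag, star_eq_conjTranspose, diagonal_conjTranspose, ← Circle.coe_inv_eq_conj]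

variable [Fintype n]

lemma phaseDiag_mul (c d : n → Circle) : phaseDiag (c * d) = phaseDiag c * phaseDiag d := by
  simp [phaseDiag, diagonal_mul_diagonal]

lemma phaseDiag_mul_inv (c : n → Circle) : phaseDiag c * phaseDiag c⁻¹ = 1 := by
  rw [← phaseDiag_mul, mul_inv_cancel]
  simp [phaseDiag]

lemma phaseDiag_inv_mul (c : n → Circle) : phaseDiag c⁻¹ * phaseDiag c = 1 := by
  rw [← phaseDiag_mul, inv_mul_cancel]
  simp [phaseDiag]

lemma phaseDiag_mem_unitaryGroup (c : n → Circle) : phaseDiag c ∈ unitaryGroup n ℂ := by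
  rw [mem_unitaryGroup_iff, star_phaseDiag, phaseDiag_mul_inv]

lemma phaseDiag_mul_mul_phaseDiag_apply (α β : n → Circle) (M : Matrix n n ℂ) (i j : n) :
    (phaseDiag α * M * phaseDiag β) i j = α i * M i j * β j := by
  simp [phaseDiag]

lemma exists_phaseDiag_mul_mul_phaseDiag_eq_norm (M : Matrix n n ℂ) (i₀ j₀ : n) :
    ∃ α β : n → Circle, (∀ i, (phaseDiag α * M * phaseDiag β) i j₀ = ‖M i j₀‖) ∧
      ∀ j, (phaseDiag α * M * phaseDiag β) i₀ j = ‖M i₀ j‖ := by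
  set p : ℂ → Circle := fun z => Circle.exp (Complex.arg z)
  have hp (z : ℂ) : z / p z = ‖z‖ := by
    rw [div_eq_iff (Circle.coe_ne_zero _)]
    simp only [p, Circle.coe_exp, Complex.norm_mul_exp_arg_mul_I]
  refine ⟨fun i => p (M i₀ j₀) / p (M i j₀), fun j => (p (M i₀ j))⁻¹,
    fun i => ?_, fun j => ?_⟩
  · rw [phaseDiag_mul_mul_phaseDiag_apply, ← hp]
    push_cast
    field_simp
  · rw [phaseDiag_mul_mul_phaseDiag_apply, ← hp]
    push_cast
    field_simp

lemma eq_phaseDiag_mul_mul_phaseDiag_of_eq {α β α' β' : n → Circle} {M M' N : Matrix n n ℂ}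
    (h : phaseDiag α * M * phaseDiag β = N) (h' : phaseDiag α' * M' * phaseDiag β' = N) :
    M' = phaseDiag (α'⁻¹ * α) * M * phaseDiag (β * β'⁻¹) := by
  calc M' = phaseDiag α'⁻¹ * (phaseDiag α' * M' * phaseDiag β') * phaseDiag β'⁻¹ := by
        simp only [← Matrix.mul_assoc, phaseDiag_inv_mul, Matrix.one_mul]
        simp only [Matrix.mul_assoc, phaseDiag_mul_inv, Matrix.mul_one]
    _ = phaseDiag α'⁻¹ * (phaseDiag α * M * phaseDiag β) * phaseDiag β'⁻¹ := by rw [h, h']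
    _ = phaseDiag (α'⁻¹ * α) * M * phaseDiag (β * β'⁻¹) := by
        simp only [phaseDiag_mul, Matrix.mul_assoc]

end PhaseEquivalence

section OrthonormalBases

variable {n : Type*} [Fintype n]

lemma star_transpose_of_mul_transpose_of_apply (e f : n → n → ℂ) (i j : n) :
    (star (of e)ᵀ * (of f)ᵀ) i j = star (e i) ⬝ᵥ f j := by
  simp [star_eq_conjTranspose, mul_apply, dotProduct]

variable [DecidableEq n]

lemma transpose_of_mem_unitaryGroup {e : n → n → ℂ}
    (he : ∀ i j, star (e i) ⬝ᵥ e j = if i = j then 1 else 0) :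
    (of e)ᵀ ∈ unitaryGroup n ℂ := by
  rw [mem_unitaryGroup_iff']
  ext i j
  simpa [star_eq_conjTranspose, mul_apply, dotProduct, one_apply] using he i j

lemma mulVec_eq_smul_of_mul_transpose_of_eq {U : Matrix n n ℂ} {e e' : n → n → ℂ}
    {c : n → Circle} (h : U * (of e)ᵀ = (of e')ᵀ * phaseDiag c) (i : n) :
    U *ᵥ e i = (c i : ℂ) • e' i := by
  funext k
  have hki := congrFun (congrFun h k) i
  rw [phaseDiag, mul_diagonal] at hki
  simpa [mul_apply, mulVec, dotProduct, mul_comm] using hki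

lemma exists_unitary_mul_eq_mul_phaseDiag {V W V' W' : Matrix n n ℂ}
    (hV : V ∈ unitaryGroup n ℂ) (hV' : V' ∈ unitaryGroup n ℂ) {c d : n → Circle}
    (h : star V' * W' = phaseDiag c * (star V * W) * phaseDiag d) :
    ∃ U ∈ unitaryGroup n ℂ, U * V = V' * phaseDiag c ∧ U * W = W' * phaseDiag d⁻¹ := by
  refine ⟨V' * phaseDiag c * star V,
    mul_mem (mul_mem hV' (phaseDiag_mem_unitaryGroup c)) (Unitary.star_mem hV), ?_, ?_⟩
  · rw [Matrix.mul_assoc, Unitary.star_mul_self_of_mem hV, Matrix.mul_one]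
  · calc V' * phaseDiag c * star V * W
        = V' * (phaseDiag c * (star V * W) * phaseDiag d) * phaseDiag d⁻¹ := by
          simp only [Matrix.mul_assoc, phaseDiag_mul_inv, Matrix.mul_one]
      _ = W' * phaseDiag d⁻¹ := by
          rw [← h, ← Matrix.mul_assoc V', Unitary.mul_star_self_of_mem hV', Matrix.one_mul]

end OrthonormalBases

lemma mul_outer_mul_conjTranspose (U : Matrix (Fin 3) (Fin 3) ℂ) (u : Fin 3 → ℂ) :
    U * outer u * Uᴴ = outer (U *ᵥ u) := by
  rw [outer, outer, mul_vecMulVec, vecMulVec_mul, vecMul_conjTranspose, star_star, star_mulVec]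

lemma outer_circle_smul (c : Circle) (u : Fin 3 → ℂ) : outer ((c : ℂ) • u) = outer u := by
  ext a b
  simp only [outer, vecMulVec_apply, Pi.star_apply, Pi.smul_apply, smul_eq_mul, star_mul']
  rw [mul_mul_mul_comm, Complex.star_def, Complex.mul_conj, Circle.normSq_coe, Complex.ofReal_one,
    one_mul]

noncomputable def feigeRoot : Matrix (Fin 3) (Fin 3) ℝ :=
  !![3/4, 1/4, √6/4; 1/4, 3/4, -(√6/4); √6/4, -(√6/4), -1/2]

lemma feigeRoot_sq (i j : Fin 3) : feigeRoot i j ^ 2 = feigeNu i j := by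
  have h6 : √6 ^ 2 = 6 := Real.sq_sqrt (by norm_num)
  fin_cases i <;> fin_cases j <;> simp [feigeRoot, feigeNu, div_pow, h6] <;> norm_num

lemma Complex.eq_of_normSq_eq_of_normSq_add_eq {r : ℝ} (hr : r ≠ 0) {x : ℂ}
    (hx : normSq x = r ^ 2) (hrx : normSq (r + x) = (2 * r) ^ 2) : x = r := by
  rw [normSq_apply] at hx hrx
  simp only [add_re, add_im, ofReal_re, ofReal_im, zero_add] at hrx
  have hre : x.re = r := mul_left_cancel₀ (mul_ne_zero two_ne_zero hr) (by linarith)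
  have him : x.im = 0 := by nlinarith
  exact Complex.ext (by simpa using hre) (by simpa using him)

lemma eq_feigeRoot_of_unitary_of_first_row_col (N : Matrix (Fin 3) (Fin 3) ℂ)
    (hN : N ∈ unitaryGroup (Fin 3) ℂ) (habs : ∀ i j, ‖N i j‖ ^ 2 = feigeNu i j)
    (hcol : ∀ i, N i 0 = feigeRoot i 0) (hrow : ∀ j, N 0 j = feigeRoot 0 j) :
    N = feigeRoot.map (↑) := by
  have horthCol := Unitary.star_mul_self_of_mem hN
  have horthRow := Unitary.mul_star_self_of_mem hN
  have hcol01 := congrFun (congrFun horthCol 0) 1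
  have hcol02 := congrFun (congrFun horthCol 0) 2
  have hrow10 := congrFun (congrFun horthRow 1) 0
  simp only [star_eq_conjTranspose, mul_apply, conjTranspose_apply, Fin.sum_univ_three, hcol, hrow,
    feigeRoot, of_apply, cons_val', cons_val_zero, cons_val_one, cons_val, cons_val_fin_one,
    RCLike.star_def, Complex.conj_ofReal, Complex.ofReal_div, Complex.ofReal_ofNat, one_div,
    Complex.ofReal_inv, ne_eq, Fin.reduceEq, not_false_eq_true, one_apply_ne]
    at hcol01 hcol02 hrow10
  have h6 : (√6 : ℂ) * √6 = 6 := by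
    rw [← Complex.ofReal_mul, Real.mul_self_sqrt (by norm_num)]; norm_num
  have h6ne : (√6 : ℂ) ≠ 0 := by simp
  have hnormSq (i j : Fin 3) : Complex.normSq (N i j) = feigeNu i j := by
    rw [Complex.normSq_eq_norm_sq, habs]
  -- column 0 ⟂ column 1 gives `3/4 + N 1 1 = -√6 N 2 1`, whose modulus is `3/2 = 2 |N 1 1|`
  have h11 : N 1 1 = (3/4 : ℝ) := by
    refine Complex.eq_of_normSq_eq_of_normSq_add_eq (by norm_num) ?_ ?_
    · rw [hnormSq, show feigeNu 1 1 = 9/16 from rfl]; norm_num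
    · rw [show ((3/4 : ℝ) : ℂ) + N 1 1 = -(√6 * N 2 1) by
          push_cast; linear_combination 4 * hcol01,
        Complex.normSq_neg, Complex.normSq_mul, Complex.normSq_ofReal, hnormSq,
        Real.mul_self_sqrt (by norm_num), show feigeNu 2 1 = 3/8 from rfl]
      norm_num
  push_cast at h11
  have h21 : N 2 1 = -(√6 / 4) :=
    mul_left_cancel₀ h6ne (by linear_combination 4 * hcol01 - h11 + h6 / 4)
  have h12 : N 1 2 = -(√6 / 4) :=
    mul_left_cancel₀ h6ne (by linear_combination 4 * hrow10 - h11 + h6 / 4)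
  have h22 : N 2 2 = -1 / 2 := mul_left_cancel₀ h6ne (by linear_combination 4 * hcol02 - h12)
  ext i j
  fin_cases i <;> fin_cases j <;> simp [hcol, hrow, h11, h12, h21, h22, feigeRoot]

lemma exists_phaseDiag_mul_mul_phaseDiag_eq_feigeRoot (M : Matrix (Fin 3) (Fin 3) ℂ)
    (hM : M ∈ unitaryGroup (Fin 3) ℂ) (habs : ∀ i j, ‖M i j‖ ^ 2 = feigeNu i j) :
    ∃ α β : Fin 3 → Circle, phaseDiag α * M * phaseDiag β = feigeRoot.map (↑) := by
  obtain ⟨α, β, hcol, hrow⟩ := exists_phaseDiag_mul_mul_phaseDiag_eq_norm M 0 0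
  have hnorm (i j : Fin 3) : ‖(phaseDiag α * M * phaseDiag β) i j‖ = ‖M i j‖ := by
    simp [phaseDiag_mul_mul_phaseDiag_apply, Circle.norm_coe]
  have hroot (i j : Fin 3) (h : 0 ≤ feigeRoot i j) : ‖M i j‖ = feigeRoot i j := by
    rw [← sq_eq_sq₀ (norm_nonneg _) h, habs, feigeRoot_sq]
  refine ⟨α, β, eq_feigeRoot_of_unitary_of_first_row_col _ ?_ ?_ (fun i => ?_) (fun j => ?_)⟩
  · exact mul_mem (mul_mem (phaseDiag_mem_unitaryGroup α) hM) (phaseDiag_mem_unitaryGroup β)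
  · simpa only [hnorm] using habs
  · rw [hcol, hroot]
    fin_cases i <;> simp [feigeRoot, div_nonneg]
  · rw [hrow, hroot]
    fin_cases j <;> simp [feigeRoot, div_nonneg]

/-- Pairs of `ν`-biased bases of `ℂ³` for the Feige matrix `ν` are unique up to a single
unitary: if `({e_i}, {f_j})` and `({e'_i}, {f'_j})` are pairs of orthonormal bases of `ℂ³`
with `|⟨e_i, f_j⟩|² = ν_{ij}` and `|⟨e'_i, f'_j⟩|² = ν_{ij}` for all `i, j`, then there is
a unitary `U` with `U|e_i⟩⟨e_i|U* = |e'_i⟩⟨e'_i|` and `U|f_j⟩⟨f_j|U* = |f'_j⟩⟨f'_j|`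
(same index labels, no relabeling). -/
theorem feige_nu_biased_bases_unique
    (e f e' f' : Fin 3 → (Fin 3 → ℂ))
    (he : ∀ i j, star (e i) ⬝ᵥ e j = if i = j then 1 else 0)
    (hf : ∀ i j, star (f i) ⬝ᵥ f j = if i = j then 1 else 0)
    (he' : ∀ i j, star (e' i) ⬝ᵥ e' j = if i = j then 1 else 0)
    (hf' : ∀ i j, star (f' i) ⬝ᵥ f' j = if i = j then 1 else 0)
    (hbias : ∀ i j, ‖star (e i) ⬝ᵥ f j‖ ^ 2 = feigeNu i j)
    (hbias' : ∀ i j, ‖star (e' i) ⬝ᵥ f' j‖ ^ 2 = feigeNu i j) :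
    ∃ U : Matrix (Fin 3) (Fin 3) ℂ, Uᴴ * U = 1 ∧ U * Uᴴ = 1 ∧
      (∀ i, U * outer (e i) * Uᴴ = outer (e' i)) ∧
      (∀ j, U * outer (f j) * Uᴴ = outer (f' j)) := by
  have hV := transpose_of_mem_unitaryGroup he
  have hV' := transpose_of_mem_unitaryGroup he'
  obtain ⟨α, β, hM⟩ := exists_phaseDiag_mul_mul_phaseDiag_eq_feigeRoot _
    (mul_mem (Unitary.star_mem hV) (transpose_of_mem_unitaryGroup hf))
    (by simpa only [star_transpose_of_mul_transpose_of_apply] using hbias)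
  obtain ⟨α', β', hM'⟩ := exists_phaseDiag_mul_mul_phaseDiag_eq_feigeRoot _
    (mul_mem (Unitary.star_mem hV') (transpose_of_mem_unitaryGroup hf'))
    (by simpa only [star_transpose_of_mul_transpose_of_apply] using hbias')
  obtain ⟨U, hU, hUe, hUf⟩ :=
    exists_unitary_mul_eq_mul_phaseDiag hV hV' (eq_phaseDiag_mul_mul_phaseDiag_of_eq hM hM')
  refine ⟨U, Unitary.star_mul_self_of_mem hU, Unitary.mul_star_self_of_mem hU,
    fun i => ?_, fun j => ?_⟩
  · rw [mul_outer_mul_conjTranspose, mulVec_eq_smul_of_mul_transpose_of_eq hUe, outer_circle_smul]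
  · rw [mul_outer_mul_conjTranspose, mulVec_eq_smul_of_mul_transpose_of_eq hUf, outer_circle_smul]
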